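/- arXiv:1307.4829 — 3 statements merged into one kernel-verified Lean document; each statement's English description precedes it below -/
import Mathlib

section
/- Let s > 0 and define I^s f(z) = (1/Γ(s)) ∫₀¹ t^{n-1}(1-t)^{s-1} f(tz) dt for entire f. Then for the Fock kernel K(z,w) = e^{z·w̄} one has I^s K(·,z)(z) = (1/Γ(s)) ∫₀¹ t^{n-1}(1-t)^{s-1} e^{t|z|²} dt, and this quantity is comparable to (1+|z|)^{-2s} e^{|z|²} uniformly in z ∈ ℂⁿ; i.e., there exist c, C > 0 with c(1+|z|)^{-2s} e^{|z|²} ≤ (1/Γ(s)) ∫₀¹ t^{n-1}(1-t)^{s-1} e^{t|z|²} dt ≤ C(1+|z|)^{-2s} e^{|z|²} for all z ∈ ℂⁿ. -/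
open MeasureTheory Set intervalIntegral Real

/-!
Substituting `t ↦ 1 - t` turns the integral into `e^{|z|²} ∫₀¹ u^{s-1} (1-u)^{n-1} e^{-r u} du`
with `r = |z|²`, and this last integral is comparable to `(1 + r)^{-s}`: from below by restricting
to `u ≤ 1 / (2(1 + r))`, where the other two factors are bounded below, and from above because
`e^{-r u} ≤ e · e^{-(1+r) u}` on `[0, 1]`, which gives the Gamma integral `Γ(s) (1 + r)^{-s}`.
Finally `1 + |z|² ≤ (1 + |z|)² ≤ 2 (1 + |z|²)`.
-/

lemma exp_inner_real_smul_self {E : Type*} [NormedAddCommGroup E] [InnerProductSpace ℂ E]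
    [Module ℝ E] [IsScalarTower ℝ ℂ E] (z : E) (t : ℝ) :
    Complex.exp (inner ℂ z (t • z)) = exp (t * ‖z‖ ^ 2) := by
  rw [RCLike.real_smul_eq_coe_smul (K := ℂ), inner_smul_real_right, inner_self_eq_norm_sq_to_K,
    Complex.ofReal_exp, Complex.real_smul]
  push_cast
  rfl

noncomputable def betaExpIntegral (p : ℕ) (s r : ℝ) : ℝ :=
  ∫ u in (0:ℝ)..1, u ^ (s - 1) * (1 - u) ^ p * exp (-(r * u))

lemma intervalIntegrable_rpow_sub_one_mul {s : ℝ} (hs : 0 < s) {g : ℝ → ℝ} (hg : Continuous g)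
    (a b : ℝ) : IntervalIntegrable (fun u => u ^ (s - 1) * g u) volume a b :=
  (intervalIntegrable_rpow' (by linarith)).mul_continuousOn hg.continuousOn

lemma integral_rpow_sub_one {s : ℝ} (hs : 0 < s) (b : ℝ) :
    ∫ u in (0:ℝ)..b, u ^ (s - 1) = b ^ s / s := by
  rw [integral_rpow (Or.inl (by linarith)), zero_rpow (by linarith), sub_add_cancel, sub_zero]

lemma integral_pow_mul_one_sub_rpow_mul_exp (p : ℕ) (s r : ℝ) :
    ∫ t in (0:ℝ)..1, t ^ p * (1 - t) ^ (s - 1) * exp (t * r) = exp r * betaExpIntegral p s r := by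
  have hsub := integral_comp_sub_left (fun t => t ^ p * (1 - t) ^ (s - 1) * exp (t * r))
    (a := 0) (b := 1) 1
  rw [sub_zero, sub_self] at hsub
  rw [betaExpIntegral, ← intervalIntegral.integral_const_mul, ← hsub]
  refine integral_congr fun u _ => ?_
  simp only [sub_sub_cancel]
  rw [show (1 - u) * r = r + -(r * u) by ring, exp_add]
  ring

lemma betaExpIntegral_lower (p : ℕ) {s r : ℝ} (hs : 0 < s) (hr : 0 ≤ r) :
    (1 / 2) ^ p * exp (-(1 / 2)) * 2 ^ (-s) / s * (1 + r) ^ (-s) ≤ betaExpIntegral p s r := by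
  set b : ℝ := (2 * (1 + r))⁻¹
  have hb : 0 < b := by positivity
  have hrb : r * b ≤ 1 / 2 := by
    rw [← div_eq_mul_inv, div_le_iff₀ (by positivity)]; linarith
  have hb_half : b ≤ 1 / 2 := by
    rw [inv_le_comm₀ (by positivity) (by norm_num)]; linarith
  set K : ℝ := (1 / 2) ^ p * exp (-(1 / 2))
  have hf : ∀ a c, IntervalIntegrable (fun u => u ^ (s - 1) * (1 - u) ^ p * exp (-(r * u)))
      volume a c := by
    intro a c
    simpa only [mul_assoc] using intervalIntegrable_rpow_sub_one_mul hs (by fun_prop) a c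
  -- On `[0, b]` both `(1 - u) ^ p ≥ 2 ^ (-p)` and `exp (-(r u)) ≥ exp (-1/2)`.
  have h_init : K * (b ^ s / s) ≤ ∫ u in (0:ℝ)..b, u ^ (s - 1) * (1 - u) ^ p * exp (-(r * u)) := by
    rw [← integral_rpow_sub_one hs, ← intervalIntegral.integral_const_mul]
    refine integral_mono_on hb.le ((intervalIntegrable_rpow' (by linarith)).const_mul K)
      (hf 0 b) fun u ⟨hu0, hub⟩ => ?_
    rw [mul_comm K, mul_assoc]
    refine mul_le_mul_of_nonneg_left (mul_le_mul ?_ ?_ (by positivity) ?_) (by positivity)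
    · exact pow_le_pow_left₀ (by norm_num) (by linarith) p
    · exact exp_le_exp.2 (by nlinarith)
    · exact pow_nonneg (by linarith) p
  have h_tail : 0 ≤ ∫ u in b..1, u ^ (s - 1) * (1 - u) ^ p * exp (-(r * u)) :=
    integral_nonneg (by linarith) fun u ⟨hbu, hu1⟩ =>
      have : 0 ≤ u := by linarith
      have : 0 ≤ 1 - u := by linarith
      by positivity
  have hbs : K * 2 ^ (-s) / s * (1 + r) ^ (-s) = K * (b ^ s / s) := by
    rw [inv_rpow (by positivity), ← rpow_neg (by positivity), mul_rpow zero_le_two (by linarith)]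
    ring
  rw [hbs, betaExpIntegral, ← integral_add_adjacent_intervals (hf 0 b) (hf b 1)]
  linarith

lemma betaExpIntegral_le (p : ℕ) {s r : ℝ} (hs : 0 < s) (hr : 0 ≤ r) :
    betaExpIntegral p s r ≤ exp 1 * Gamma s * (1 + r) ^ (-s) := by
  have hr1 : 0 < 1 + r := by linarith
  set g : ℝ → ℝ := fun u => exp 1 * (u ^ (s - 1) * exp (-((1 + r) * u)))
  have hg_int : ∫ u in Ioi 0, g u = exp 1 * Gamma s * (1 + r) ^ (-s) := by
    rw [MeasureTheory.integral_const_mul, integral_rpow_mul_exp_neg_mul_Ioi hs hr1, one_div,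
      inv_rpow hr1.le, ← rpow_neg hr1.le]
    ring
  have hg : IntegrableOn g (Ioi 0) :=
    Integrable.of_integral_ne_zero (by rw [hg_int]; positivity)
  rw [← hg_int, betaExpIntegral, integral_of_le zero_le_one]
  calc ∫ u in Ioc 0 1, u ^ (s - 1) * (1 - u) ^ p * exp (-(r * u))
      ≤ ∫ u in Ioc 0 1, g u := by
        refine setIntegral_mono_on ?_ (hg.mono_set Ioc_subset_Ioi_self) measurableSet_Ioc
          fun u ⟨hu0, hu1⟩ => ?_
        · exact (intervalIntegrable_iff_integrableOn_Ioc_of_le zero_le_one).1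
            (by simpa only [mul_assoc] using
              intervalIntegrable_rpow_sub_one_mul hs (by fun_prop) 0 1)
        · have h1u : (1 - u) ^ p ≤ 1 := pow_le_one₀ (by linarith) (by linarith)
          have hexp : exp (-(r * u)) ≤ exp 1 * exp (-((1 + r) * u)) := by
            rw [← exp_add]; exact exp_le_exp.2 (by nlinarith)
          calc u ^ (s - 1) * (1 - u) ^ p * exp (-(r * u))
              ≤ u ^ (s - 1) * 1 * (exp 1 * exp (-((1 + r) * u))) := by gcongr
            _ = g u := by ring
    _ ≤ ∫ u in Ioi 0, g u :=
        setIntegral_mono_set hg ((ae_restrict_iff' measurableSet_Ioi).2 <|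
          Filter.Eventually.of_forall fun u (hu : 0 < u) => by positivity)
          Ioc_subset_Ioi_self.eventuallyLE

lemma one_add_rpow_neg_two_mul_le {s m : ℝ} (hs : 0 < s) (hm : 0 ≤ m) :
    (1 + m) ^ (-(2 * s)) ≤ (1 + m ^ 2) ^ (-s) := by
  rw [neg_mul_eq_mul_neg, rpow_mul (by linarith), rpow_two]
  exact rpow_le_rpow_of_nonpos (by positivity) (by nlinarith) (by linarith)

lemma one_add_sq_rpow_neg_le {s m : ℝ} (hs : 0 < s) (hm : 0 ≤ m) :
    (1 + m ^ 2) ^ (-s) ≤ 2 ^ s * (1 + m) ^ (-(2 * s)) := by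
  have h : (2 * (1 + m ^ 2)) ^ (-s) ≤ ((1 + m) ^ 2) ^ (-s) :=
    rpow_le_rpow_of_nonpos (by positivity) (by nlinarith [sq_nonneg (1 - m)]) (by linarith)
  rw [mul_rpow zero_le_two (by positivity), rpow_neg zero_le_two, ← div_eq_inv_mul,
    div_le_iff₀' (by positivity)] at h
  rwa [neg_mul_eq_mul_neg, rpow_mul (by linarith), rpow_two]

lemma le_integral_pow_mul_one_sub_rpow_mul_exp_sq (p : ℕ) {s m : ℝ} (hs : 0 < s) (hm : 0 ≤ m) :
    (1 / 2) ^ p * exp (-(1 / 2)) * 2 ^ (-s) / s * (1 + m) ^ (-(2 * s)) * exp (m ^ 2) ≤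
      ∫ t in (0:ℝ)..1, t ^ p * (1 - t) ^ (s - 1) * exp (t * m ^ 2) := by
  rw [integral_pow_mul_one_sub_rpow_mul_exp, mul_comm _ (exp _)]
  gcongr
  exact (mul_le_mul_of_nonneg_left (one_add_rpow_neg_two_mul_le hs hm) (by positivity)).trans
    (betaExpIntegral_lower p hs (sq_nonneg m))

lemma integral_pow_mul_one_sub_rpow_mul_exp_sq_le (p : ℕ) {s m : ℝ} (hs : 0 < s) (hm : 0 ≤ m) :
    ∫ t in (0:ℝ)..1, t ^ p * (1 - t) ^ (s - 1) * exp (t * m ^ 2) ≤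
      exp 1 * Gamma s * 2 ^ s * (1 + m) ^ (-(2 * s)) * exp (m ^ 2) := by
  rw [integral_pow_mul_one_sub_rpow_mul_exp, mul_comm _ (exp _), mul_assoc _ (2 ^ s)]
  gcongr
  exact (betaExpIntegral_le p hs (sq_nonneg m)).trans
    (mul_le_mul_of_nonneg_left (one_add_sq_rpow_neg_le hs hm) (by positivity))

theorem stmt_6_general (n : ℕ) (s : ℝ) (hs : 0 < s) :
    (∀ (z : EuclideanSpace ℂ (Fin n)) (t : ℝ),
        Complex.exp (inner ℂ z ((t : ℝ) • z) : ℂ) = Real.exp (t * ‖z‖^2)) ∧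
    ∃ c > 0, ∃ C > 0, ∀ z : EuclideanSpace ℂ (Fin n),
      c * (1 + ‖z‖) ^ (-(2*s)) * Real.exp (‖z‖^2) ≤
        (1 / Real.Gamma s) *
          ∫ t in (0:ℝ)..1, t^(n-1) * (1-t) ^ (s-1) * Real.exp (t * ‖z‖^2) ∧
      (1 / Real.Gamma s) *
          (∫ t in (0:ℝ)..1, t^(n-1) * (1-t) ^ (s-1) * Real.exp (t * ‖z‖^2)) ≤
        C * (1 + ‖z‖) ^ (-(2*s)) * Real.exp (‖z‖^2) := by
  have hΓ : 0 < Gamma s := Gamma_pos_of_pos hs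
  refine ⟨exp_inner_real_smul_self, (1 / 2) ^ (n - 1) * exp (-(1 / 2)) * 2 ^ (-s) / s / Gamma s,
    by positivity, exp 1 * 2 ^ s, by positivity, fun z => ⟨?_, ?_⟩⟩
  · have h := le_integral_pow_mul_one_sub_rpow_mul_exp_sq (n - 1) hs (norm_nonneg z)
    calc _ = 1 / Gamma s * ((1 / 2) ^ (n - 1) * exp (-(1 / 2)) * 2 ^ (-s) / s *
          (1 + ‖z‖) ^ (-(2 * s)) * exp (‖z‖ ^ 2)) := by ring
      _ ≤ _ := by gcongr
  · have h := integral_pow_mul_one_sub_rpow_mul_exp_sq_le (n - 1) hs (norm_nonneg z)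
    calc _ ≤ 1 / Gamma s * (exp 1 * Gamma s * 2 ^ s * (1 + ‖z‖) ^ (-(2 * s)) * exp (‖z‖ ^ 2)) := by
          gcongr
      _ = _ := by field_simp

theorem stmt_6 (n : ℕ) (hn : 1 ≤ n) (s : ℝ) (hs : 0 < s) :
    (∀ (z : EuclideanSpace ℂ (Fin n)) (t : ℝ),
        Complex.exp (inner ℂ z ((t : ℝ) • z) : ℂ) = Real.exp (t * ‖z‖^2)) ∧
    ∃ c > 0, ∃ C > 0, ∀ z : EuclideanSpace ℂ (Fin n),
      c * (1 + ‖z‖) ^ (-(2*s)) * Real.exp (‖z‖^2) ≤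
        (1 / Real.Gamma s) *
          ∫ t in (0:ℝ)..1, t^(n-1) * (1-t) ^ (s-1) * Real.exp (t * ‖z‖^2) ∧
      (1 / Real.Gamma s) *
          (∫ t in (0:ℝ)..1, t^(n-1) * (1-t) ^ (s-1) * Real.exp (t * ‖z‖^2)) ≤
        C * (1 + ‖z‖) ^ (-(2*s)) * Real.exp (‖z‖^2) :=
  stmt_6_general n s hs
end

section
/- Let α ∈ ℝ and let K^α(z,z) denote the diagonal of the reproducing kernel of the weighted Fock space F²_α. Then K^α(z,z) ≈ (1+|z|)^α e^{|z|²} uniformly in z ∈ ℂⁿ, i.e., there exist constants c, C > 0 with c(1+|z|)^α e^{|z|²} ≤ K^α(z,z) ≤ C(1+|z|)^α e^{|z|²}. -/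
open MeasureTheory

/-- The reproducing kernel of the weighted Fock space `F²_α`, given by its
series expansion: the coefficient of `(z·w̄)^k / k!` is `1` for the low-degree part
(`k ≤ α/2`, relevant when `α > 0`) and `Γ(n+k)/Γ(n+k-α/2)` for the tail, coming from
fractional integration `I^{-α/2}` of the classical Fock kernel `e^{z·w̄}`. -/
noncomputable def Kern (n : ℕ) (α : ℝ) (z w : EuclideanSpace ℂ (Fin n)) : ℂ :=
  ∑' k : ℕ,
    ((if (k : ℝ) ≤ α/2 then (1:ℝ) else Real.Gamma (n+k) / Real.Gamma (n+k-α/2)) : ℂ) *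
      (inner ℂ w z : ℂ)^k / (k.factorial : ℂ)

/-!
With `t = ‖z‖²` the diagonal `Kern n α z z` is the series `∑ c_k t^k / k!`, whose coefficients
`c_k = Γ(n+k) / Γ(n+k-α/2)` (for large `k`) satisfy `c_k ≍ (1+k)^{α/2}` by log-convexity of `Γ`.
So it suffices that `∑ (1+k)^β t^k / k! ≍ (1+t)^β e^t` for `t ≥ 0`: the Poisson weights
`t^k / k!` carry all of their mass `e^t` on the window `t/2 < k < 8t`, up to `O(e^{7t/8})`,
and on that window `1 + k` and `1 + t` agree up to a factor `8`.
Finally `(1 + ‖z‖²)^{α/2} ≍ (1 + ‖z‖)^α`.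
-/

open Real Asymptotics Filter Set
open scoped Nat

namespace WeightedFock

theorem isBigO_of_le_mul {α : Type*} {l : Filter α} {f g : α → ℝ} {c : ℝ}
    (hf : ∀ᶠ x in l, 0 ≤ f x) (hg : ∀ᶠ x in l, 0 ≤ g x) (h : ∀ᶠ x in l, f x ≤ c * g x) :
    f =O[l] g :=
  IsBigO.of_bound c <| by
    filter_upwards [hf, hg, h] with x hf hg h
    rwa [norm_of_nonneg hf, norm_of_nonneg hg]

theorem isTheta_comp_tendsto {α β E F : Type*} [Norm E] [Norm F] {l : Filter α} {l' : Filter β}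
    {f : α → E} {g : α → F} (h : f =Θ[l] g) {u : β → α} (hu : Tendsto u l' l) :
    (f ∘ u) =Θ[l'] (g ∘ u) :=
  ⟨h.1.comp_tendsto hu, h.2.comp_tendsto hu⟩

theorem exists_pos_bounds_of_isTheta_top {α E F : Type*} [SeminormedAddCommGroup E]
    [SeminormedAddCommGroup F] {f : α → E} {g : α → F} (h : f =Θ[⊤] g) :
    ∃ c > 0, ∃ C > 0, ∀ x, c * ‖g x‖ ≤ ‖f x‖ ∧ ‖f x‖ ≤ C * ‖g x‖ := by
  obtain ⟨C, hC, hfg⟩ := h.1.exists_pos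
  obtain ⟨c, hc, hgf⟩ := h.2.exists_pos
  refine ⟨c⁻¹, inv_pos.2 hc, C, hC, fun x => ⟨?_, isBigOWith_top.1 hfg x⟩⟩
  rw [inv_mul_le_iff₀ hc]
  exact isBigOWith_top.1 hgf x

theorem isBigO_tsum_mul_of_isBigO_top {ι α : Type*} {l : Filter α} {c w : ι → ℝ}
    {p : α → ι → ℝ} (h : c =O[⊤] w) (hw : ∀ i, 0 ≤ w i) (hp : ∀ᶠ x in l, ∀ i, 0 ≤ p x i)
    (hs : ∀ᶠ x in l, Summable fun i => w i * p x i) :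
    (fun x => ∑' i, c i * p x i) =O[l] fun x => ∑' i, w i * p x i := by
  obtain ⟨C, hC⟩ := isBigO_top.1 h
  refine IsBigO.of_bound C ?_
  filter_upwards [hp, hs] with x hp hs
  rw [norm_of_nonneg (tsum_nonneg fun i => mul_nonneg (hw i) (hp i)), ← tsum_mul_left]
  refine tsum_of_norm_bounded (hs.mul_left C).hasSum fun i => ?_
  rw [norm_mul, norm_of_nonneg (hp i), ← mul_assoc, ← norm_of_nonneg (hw i)]
  exact mul_le_mul_of_nonneg_right (hC i) (hp i)

theorem isTheta_tsum_mul_of_isTheta_top {ι α : Type*} {l : Filter α} {c w : ι → ℝ}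
    {p : α → ι → ℝ} (h : c =Θ[⊤] w) (hc : ∀ i, 0 ≤ c i) (hw : ∀ i, 0 ≤ w i)
    (hp : ∀ᶠ x in l, ∀ i, 0 ≤ p x i) (hs : ∀ᶠ x in l, Summable fun i => w i * p x i) :
    (fun x => ∑' i, c i * p x i) =Θ[l] fun x => ∑' i, w i * p x i := by
  have hs' : ∀ᶠ x in l, Summable fun i => c i * p x i :=
    hs.mono fun x hx => summable_of_isBigO hx ((h.1.mono le_top).mul (isBigO_refl _ _))
  exact ⟨isBigO_tsum_mul_of_isBigO_top h.1 hw hp hs, isBigO_tsum_mul_of_isBigO_top h.2 hc hp hs'⟩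

theorem rpow_le_mul_rpow_of_le_mul {u v M : ℝ} (hu : 0 < u) (hv : 0 < v) (huv : u ≤ M * v)
    (hvu : v ≤ M * u) (β : ℝ) : u ^ β ≤ M ^ |β| * v ^ β := by
  have hM : 0 < M := pos_of_mul_pos_left (hu.trans_le huv) hv.le
  rcases le_or_gt 0 β with hβ | hβ
  · rw [abs_of_nonneg hβ, ← mul_rpow hM.le hv.le]
    exact rpow_le_rpow hu.le huv hβ
  · have hvM : v / M ≤ u := by rwa [div_le_iff₀ hM, mul_comm]
    calc u ^ β ≤ (v / M) ^ β := rpow_le_rpow_of_nonpos (by positivity) hvM hβ.le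
      _ = M ^ |β| * v ^ β := by
        rw [div_rpow hv.le hM.le, abs_of_neg hβ, rpow_neg hM.le]; ring

theorem isTheta_rpow_of_le_mul {α : Type*} {l : Filter α} {f g : α → ℝ} {M : ℝ}
    (hf : ∀ᶠ x in l, 0 < f x) (hg : ∀ᶠ x in l, 0 < g x) (hfg : ∀ᶠ x in l, f x ≤ M * g x)
    (hgf : ∀ᶠ x in l, g x ≤ M * f x) (β : ℝ) :
    (fun x => f x ^ β) =Θ[l] fun x => g x ^ β := by
  have hf' : ∀ᶠ x in l, 0 ≤ f x ^ β := hf.mono fun x hx => (rpow_pos_of_pos hx β).le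
  have hg' : ∀ᶠ x in l, 0 ≤ g x ^ β := hg.mono fun x hx => (rpow_pos_of_pos hx β).le
  refine ⟨isBigO_of_le_mul (c := M ^ |β|) hf' hg' ?_, isBigO_of_le_mul (c := M ^ |β|) hg' hf' ?_⟩
  · filter_upwards [hf, hg, hfg, hgf] with x hf hg hfg hgf
    exact rpow_le_mul_rpow_of_le_mul hf hg hfg hgf β
  · filter_upwards [hf, hg, hfg, hgf] with x hf hg hfg hgf
    exact rpow_le_mul_rpow_of_le_mul hg hf hgf hfg β

theorem one_add_rpow_le_mul_exp (γ : ℝ) {ε : ℝ} (hε : 0 < ε) :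
    ∃ C > 0, ∀ t, 0 ≤ t → (1 + t) ^ γ ≤ C * exp (ε * t) := by
  set m := ⌈γ⌉₊
  refine ⟨m ! / ε ^ m * exp ε, by positivity, fun t ht => ?_⟩
  have hexp := pow_div_factorial_le_exp _ (by positivity : 0 ≤ ε * (1 + t)) m
  rw [mul_pow, div_le_iff₀ (by positivity)] at hexp
  calc (1 + t) ^ γ ≤ (1 + t) ^ (m : ℝ) := rpow_le_rpow_of_exponent_le (by linarith) (Nat.le_ceil γ)
    _ = (ε ^ m * (1 + t) ^ m) / ε ^ m := by rw [rpow_natCast]; field_simp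
    _ ≤ exp (ε * (1 + t)) * m ! / ε ^ m := by gcongr
    _ = m ! / ε ^ m * exp ε * exp (ε * t) := by rw [mul_one_add, exp_add]; ring

theorem one_add_rpow_abs_le (β : ℝ) :
    ∃ D > 0, ∀ t, 0 ≤ t → (1 + t) ^ |β| ≤ D * ((1 + t) ^ β * exp (1 / 8 * t)) := by
  obtain ⟨D, hD, h⟩ := one_add_rpow_le_mul_exp (2 * |β|) (by norm_num : (0 : ℝ) < 1 / 8)
  refine ⟨D, hD, fun t ht => ?_⟩
  have ht1 : (1 : ℝ) ≤ 1 + t := by linarith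
  calc (1 + t) ^ |β| = (1 + t) ^ (2 * |β|) * (1 + t) ^ (-|β|) := by
        rw [← rpow_add (by linarith)]; ring_nf
    _ ≤ D * exp (1 / 8 * t) * (1 + t) ^ β := by
        gcongr
        · exact h t ht
        · exact neg_abs_le β
    _ = D * ((1 + t) ^ β * exp (1 / 8 * t)) := by ring

theorem log_Gamma_add_one_sub {x : ℝ} (hx : 0 < x) :
    log (Gamma (x + 1)) - log (Gamma x) = log x := by
  rw [Gamma_add_one hx.ne', log_mul hx.ne' (Gamma_pos_of_pos hx).ne']
  ring

theorem Gamma_div_Gamma_eq_exp {a b : ℝ} (ha : 0 < a) (hb : 0 < b) :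
    Gamma b / Gamma a = exp (log (Gamma b) - log (Gamma a)) := by
  rw [exp_sub, exp_log (Gamma_pos_of_pos hb), exp_log (Gamma_pos_of_pos ha)]

-- Both bounds compare the slope of the convex function `log ∘ Γ` on `[a, b]` with its slopes
-- `log (a - 1)` on `[a - 1, a]` and `log b` on `[b, b + 1]`.
theorem Gamma_div_Gamma_le_rpow {a b : ℝ} (ha : 0 < a) (hab : a ≤ b) :
    Gamma b / Gamma a ≤ b ^ (b - a) := by
  have hb := ha.trans_le hab
  rcases hab.eq_or_lt with rfl | hlt
  · simp [(Gamma_pos_of_pos ha).ne']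
  have hslope := convexOn_log_Gamma.slope_mono_adjacent ha (by simp; linarith : b + 1 ∈ Ioi 0)
    hlt (lt_add_one b)
  simp only [Function.comp_apply, add_sub_cancel_left, div_one, log_Gamma_add_one_sub hb] at hslope
  rw [div_le_iff₀ (sub_pos.2 hlt)] at hslope
  rw [Gamma_div_Gamma_eq_exp ha hb, rpow_def_of_pos hb]
  exact exp_le_exp.2 (by linarith)

theorem sub_one_rpow_le_Gamma_div_Gamma {a b : ℝ} (ha : 1 < a) (hab : a ≤ b) :
    (a - 1) ^ (b - a) ≤ Gamma b / Gamma a := by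
  have ha0 : 0 < a := by linarith
  rcases hab.eq_or_lt with rfl | hlt
  · simp [(Gamma_pos_of_pos ha0).ne']
  have hslope := convexOn_log_Gamma.slope_mono_adjacent (by simp; linarith : a - 1 ∈ Ioi 0)
    (ha0.trans hlt) (sub_one_lt a) hlt
  have hfe := log_Gamma_add_one_sub (sub_pos.2 ha)
  simp only [Function.comp_apply, sub_sub_cancel, div_one, sub_add_cancel] at hslope hfe
  rw [hfe, le_div_iff₀ (sub_pos.2 hlt)] at hslope
  rw [Gamma_div_Gamma_eq_exp ha0 (ha0.trans hlt), rpow_def_of_pos (sub_pos.2 ha)]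
  exact exp_le_exp.2 (by linarith)

theorem isTheta_Gamma_div_Gamma_sub (s : ℝ) :
    (fun x => Gamma x / Gamma (x - s)) =Θ[atTop] fun x => x ^ s := by
  have hlarge : ∀ᶠ x : ℝ in atTop, 2 * |s| + 2 ≤ x := eventually_ge_atTop _
  have hpos : ∀ᶠ x : ℝ in atTop, 0 ≤ Gamma x / Gamma (x - s) := by
    filter_upwards [hlarge] with x hx
    exact div_nonneg (Gamma_nonneg_of_nonneg (by linarith [abs_nonneg s]))
      (Gamma_nonneg_of_nonneg (by linarith [le_abs_self s, abs_nonneg s]))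
  have hnonneg : ∀ {c : ℝ}, |c| ≤ |s| + 1 → ∀ᶠ x : ℝ in atTop, 0 ≤ (x + c) ^ s := by
    intro c hc
    filter_upwards [hlarge] with x hx
    exact rpow_nonneg (by linarith [neg_abs_le c, abs_nonneg s]) s
  have hrpow : ∀ {c : ℝ}, |c| ≤ |s| + 1 → (fun x : ℝ => (x + c) ^ s) =Θ[atTop] fun x => x ^ s := by
    intro c hc
    refine isTheta_rpow_of_le_mul (M := 2) ?_ ?_ ?_ ?_ s <;>
      filter_upwards [hlarge] with x hx <;>
      linarith [neg_abs_le c, le_abs_self c, abs_nonneg s]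
  suffices ∃ c₁ c₂ : ℝ, |c₁| ≤ |s| + 1 ∧ |c₂| ≤ |s| + 1 ∧
      ∀ᶠ x : ℝ in atTop, (x + c₁) ^ s ≤ Gamma x / Gamma (x - s) ∧
        Gamma x / Gamma (x - s) ≤ (x + c₂) ^ s by
    obtain ⟨c₁, c₂, hc₁, hc₂, h⟩ := this
    refine ⟨(isBigO_of_le_mul (c := 1) hpos (hnonneg hc₂) ?_).trans (hrpow hc₂).1,
      (hrpow hc₁).2.trans (isBigO_of_le_mul (c := 1) (hnonneg hc₁) hpos ?_)⟩ <;>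
      filter_upwards [h] with x hx <;> linarith [hx.1, hx.2]
  rcases le_or_gt 0 s with hs | hs
  · refine ⟨-s - 1, 0, by rw [abs_of_nonpos (by linarith), abs_of_nonneg hs]; linarith,
      by rw [abs_zero]; positivity, ?_⟩
    filter_upwards [hlarge] with x hx
    rw [abs_of_nonneg hs] at hx
    have h₁ := sub_one_rpow_le_Gamma_div_Gamma (a := x - s) (b := x) (by linarith) (by linarith)
    have h₂ := Gamma_div_Gamma_le_rpow (a := x - s) (b := x) (by linarith) (by linarith)
    rw [sub_sub_cancel] at h₁ h₂
    exact ⟨by convert h₁ using 2; ring, by rwa [add_zero]⟩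
  · refine ⟨-s, -1, by rw [abs_neg]; linarith, by simp, ?_⟩
    filter_upwards [hlarge] with x hx
    rw [abs_of_neg hs] at hx
    have hx1 : 1 < x := by linarith
    have hx0 : 0 < x := by linarith
    have h₁ := Gamma_div_Gamma_le_rpow (a := x) (b := x - s) hx0 (by linarith)
    have h₂ := sub_one_rpow_le_Gamma_div_Gamma (a := x) (b := x - s) hx1 (by linarith)
    rw [sub_sub_cancel_left] at h₁ h₂
    constructor
    · calc (x + -s) ^ s = ((x - s) ^ (-s))⁻¹ := by
            rw [rpow_neg (by linarith), inv_inv, sub_eq_add_neg]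
        _ ≤ (Gamma (x - s) / Gamma x)⁻¹ :=
          inv_anti₀ (div_pos (Gamma_pos_of_pos (by linarith)) (Gamma_pos_of_pos hx0)) h₁
        _ = Gamma x / Gamma (x - s) := inv_div _ _
    · calc Gamma x / Gamma (x - s) = (Gamma (x - s) / Gamma x)⁻¹ := (inv_div _ _).symm
        _ ≤ ((x - 1) ^ (-s))⁻¹ := inv_anti₀ (rpow_pos_of_pos (by linarith) _) h₂
        _ = (x + -1) ^ s := by rw [rpow_neg (by linarith), inv_inv, sub_eq_add_neg]

noncomputable def fockCoeff (n : ℕ) (α : ℝ) (k : ℕ) : ℝ :=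
  if (k : ℝ) ≤ α / 2 then 1 else Gamma (n + k) / Gamma (n + k - α / 2)

theorem fockCoeff_pos {n : ℕ} (hn : 1 ≤ n) (α : ℝ) (k : ℕ) : 0 < fockCoeff n α k := by
  unfold fockCoeff
  split_ifs with hk
  · exact one_pos
  · have hn' : (1 : ℝ) ≤ n := by exact_mod_cast hn
    push Not at hk
    exact div_pos (Gamma_pos_of_pos (by positivity)) (Gamma_pos_of_pos (by linarith))

theorem isTheta_fockCoeff (n : ℕ) (α : ℝ) :
    fockCoeff n α =Θ[atTop] fun k => (1 + k : ℝ) ^ (α / 2) := by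
  have htend : Tendsto (fun k : ℕ => (n : ℝ) + k) atTop atTop :=
    tendsto_atTop_add_const_left _ _ tendsto_natCast_atTop_atTop
  have hGamma : (fun k : ℕ => Gamma (n + k) / Gamma (n + k - α / 2)) =Θ[atTop]
      fun k : ℕ => ((n : ℝ) + k) ^ (α / 2) :=
    isTheta_comp_tendsto (isTheta_Gamma_div_Gamma_sub _) htend
  have hshift : (fun k : ℕ => ((n : ℝ) + k) ^ (α / 2)) =Θ[atTop]
      fun k : ℕ => (1 + k : ℝ) ^ (α / 2) := by
    refine isTheta_rpow_of_le_mul (M := n + 2) ?_ ?_ ?_ ?_ _ <;>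
      filter_upwards [eventually_ge_atTop 1] with k hk <;>
      have hk' : (1 : ℝ) ≤ k := by exact_mod_cast hk
    all_goals nlinarith [(n.cast_nonneg : (0 : ℝ) ≤ n)]
  refine EventuallyEq.trans_isTheta ?_ (hGamma.trans hshift)
  filter_upwards [eventually_gt_atTop ⌈α / 2⌉₊] with k hk
  have hk' : α / 2 < k := (Nat.le_ceil _).trans_lt (by exact_mod_cast hk)
  simp [fockCoeff, not_le.2 hk']

theorem isTheta_top_fockCoeff {n : ℕ} (hn : 1 ≤ n) (α : ℝ) :
    fockCoeff n α =Θ[⊤] fun k => (1 + k : ℝ) ^ (α / 2) := by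
  have hw : ∀ k : ℕ, (1 + k : ℝ) ^ (α / 2) ≠ 0 := fun k =>
    (rpow_pos_of_pos (by positivity) _).ne'
  have hc : ∀ k, fockCoeff n α k ≠ 0 := fun k => (fockCoeff_pos hn α k).ne'
  have h := isTheta_fockCoeff n α
  exact ⟨isBigO_top.2 <| (isBigO_nat_atTop_iff fun k hk => absurd hk (hw k)).1 h.1,
    isBigO_top.2 <| (isBigO_nat_atTop_iff fun k hk => absurd hk (hc k)).1 h.2⟩

theorem hasSum_pow_div_factorial (t : ℝ) : HasSum (fun k : ℕ => t ^ k / k !) (exp t) := by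
  simpa [Real.exp_eq_exp_ℝ] using NormedSpace.expSeries_div_hasSum_exp t

theorem exp_one_div_eight_lt_two : exp (1 / 8) < 2 := by
  have hsq : exp (1 / 8) ^ 2 < 2 ^ 2 := by
    rw [← exp_nat_mul]
    linarith [exp_le_exp.2 (by norm_num : (2 : ℕ) * (1 / 8 : ℝ) ≤ 1), exp_one_lt_d9]
  exact (pow_lt_pow_iff_left₀ (exp_pos _).le zero_le_two two_ne_zero).1 hsq

theorem pow_div_factorial_le_of_le_half {t : ℝ} {k : ℕ} (hk : (k : ℝ) ≤ t / 2) :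
    t ^ k / k ! ≤ exp (3 * t / 8) * ((t / 2) ^ k / k !) := by
  have ht : 0 ≤ t := by linarith [k.cast_nonneg (α := ℝ)]
  have h2 : (2 : ℝ) ^ k ≤ exp (3 * t / 8) := by
    calc (2 : ℝ) ^ k = exp (k * log 2) := by rw [exp_nat_mul, exp_log two_pos]
      _ ≤ exp (3 * t / 8) := exp_le_exp.2 (by nlinarith [log_two_lt_d9, log_two_gt_d9])
  calc t ^ k / k ! = 2 ^ k * ((t / 2) ^ k / k !) := by rw [div_pow]; field_simp
    _ ≤ exp (3 * t / 8) * ((t / 2) ^ k / k !) := by gcongr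

theorem pow_div_factorial_le_half_pow {t : ℝ} (ht : 0 ≤ t) {k : ℕ} (hk : 8 * t ≤ k) :
    t ^ k / k ! ≤ (1 / 2) ^ k := by
  have hexp : exp (8 * t) ≤ exp 1 ^ k := by
    rw [← exp_nat_mul, mul_one]
    exact exp_le_exp.2 hk
  calc t ^ k / k ! = (1 / 8) ^ k * ((8 * t) ^ k / k !) := by
        rw [mul_pow, ← mul_div_assoc, ← mul_assoc, ← mul_pow]; norm_num
    _ ≤ (1 / 8) ^ k * exp 1 ^ k := by
        gcongr
        exact (pow_div_factorial_le_exp _ (by positivity) k).trans hexp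
    _ = (exp 1 / 8) ^ k := by rw [← mul_pow]; ring
    _ ≤ (1 / 2) ^ k := pow_le_pow_left₀ (by positivity) (by linarith [exp_one_lt_d9]) k

-- The three summands dominate the `k`-th term inside the window `t/2 < k < 8t`, below it and
-- above it, respectively.
theorem one_add_natCast_rpow_mul_pow_div_factorial_le {β C t : ℝ}
    (hC : ∀ x, 0 ≤ x → (1 + x) ^ |β| ≤ C * exp (1 / 8 * x)) (ht : 0 ≤ t) (k : ℕ) :
    (1 + k) ^ β * (t ^ k / k !) ≤ 8 ^ |β| * (1 + t) ^ β * (t ^ k / k !)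
      + (1 + t) ^ |β| * (exp (3 * t / 8) * ((t / 2) ^ k / k !)) + C * (exp (1 / 8) / 2) ^ k := by
  have hC0 : 0 ≤ C := by
    have := hC 0 le_rfl
    simp only [add_zero, one_rpow, mul_zero, exp_zero, mul_one] at this
    linarith
  have hmid : 0 ≤ 8 ^ |β| * (1 + t) ^ β * (t ^ k / k !) := by positivity
  have hhead : 0 ≤ (1 + t) ^ |β| * (exp (3 * t / 8) * ((t / 2) ^ k / k !)) := by positivity
  have htail : 0 ≤ C * (exp (1 / 8) / 2) ^ k := by positivity
  have hk : (1 : ℝ) ≤ 1 + k := by linarith [k.cast_nonneg (α := ℝ)]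
  have habs : (1 + k : ℝ) ^ β ≤ (1 + k) ^ |β| := rpow_le_rpow_of_exponent_le hk (le_abs_self β)
  rcases le_or_gt (k : ℝ) (t / 2) with hlo | hlo
  · have hw : (1 + k : ℝ) ^ β ≤ (1 + t) ^ |β| :=
      habs.trans (rpow_le_rpow (by positivity) (by linarith) (abs_nonneg β))
    have := mul_le_mul hw (pow_div_factorial_le_of_le_half hlo) (by positivity) (by positivity)
    linarith
  rcases le_or_gt (8 * t) k with hhi | hhi
  · have hw : (1 + k : ℝ) ^ β ≤ C * exp (1 / 8) ^ k := by
      rw [← exp_nat_mul, mul_comm (k : ℝ)]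
      exact habs.trans (hC k k.cast_nonneg)
    have := mul_le_mul hw (pow_div_factorial_le_half_pow ht hhi) (by positivity) (by positivity)
    rw [mul_assoc, ← mul_pow, mul_one_div] at this
    linarith
  · have hw := rpow_le_mul_rpow_of_le_mul (u := 1 + k) (v := 1 + t) (M := 8) (by positivity)
      (by positivity) (by linarith) (by linarith) β
    have := mul_le_mul_of_nonneg_right hw (by positivity : (0 : ℝ) ≤ t ^ k / k !)
    linarith

theorem one_add_rpow_mul_pow_div_factorial_le_window (β : ℝ) {t : ℝ} (ht : 0 ≤ t) (k : ℕ) :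
    (1 + t) ^ β * (t ^ k / k !) ≤ 8 ^ |β| * ((1 + k) ^ β * (t ^ k / k !))
      + (1 + t) ^ β * (exp (3 * t / 8) * ((t / 2) ^ k / k !) + (1 / 2) ^ k) := by
  have hmid : 0 ≤ 8 ^ |β| * ((1 + k) ^ β * (t ^ k / k !)) := by positivity
  have hout : 0 ≤ (1 + t) ^ β * (exp (3 * t / 8) * ((t / 2) ^ k / k !) + (1 / 2) ^ k) := by
    positivity
  by_cases hwin : t / 2 < k ∧ (k : ℝ) < 8 * t
  · have hw := rpow_le_mul_rpow_of_le_mul (u := 1 + t) (v := 1 + k) (M := 8) (by positivity)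
      (by positivity) (by linarith) (by linarith) β
    have := mul_le_mul_of_nonneg_right hw (by positivity : (0 : ℝ) ≤ t ^ k / k !)
    linarith
  · have hp : t ^ k / k ! ≤ exp (3 * t / 8) * ((t / 2) ^ k / k !) + (1 / 2) ^ k := by
      rw [not_and_or, not_lt, not_lt] at hwin
      rcases hwin with hlo | hhi
      · linarith [pow_div_factorial_le_of_le_half hlo, pow_pos (by norm_num : (0 : ℝ) < 1 / 2) k]
      · linarith [pow_div_factorial_le_half_pow ht hhi,
          mul_nonneg (exp_pos (3 * t / 8)).le (by positivity : (0 : ℝ) ≤ (t / 2) ^ k / k !)]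
    have := mul_le_mul_of_nonneg_left hp (by positivity : (0 : ℝ) ≤ (1 + t) ^ β)
    linarith

theorem summable_and_tsum_one_add_rpow_mul_le {β C t : ℝ}
    (hC : ∀ x, 0 ≤ x → (1 + x) ^ |β| ≤ C * exp (1 / 8 * x)) (ht : 0 ≤ t) :
    Summable (fun k : ℕ => (1 + k) ^ β * (t ^ k / k !)) ∧
      ∑' k : ℕ, (1 + k) ^ β * (t ^ k / k !) ≤
        8 ^ |β| * (1 + t) ^ β * exp t + (1 + t) ^ |β| * exp (7 * t / 8)
          + C * (1 - exp (1 / 8) / 2)⁻¹ := by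
  have hρ : exp (1 / 8) / 2 < 1 := by linarith [exp_one_div_eight_lt_two]
  have hbound : HasSum (fun k : ℕ => 8 ^ |β| * (1 + t) ^ β * (t ^ k / k !)
      + (1 + t) ^ |β| * (exp (3 * t / 8) * ((t / 2) ^ k / k !)) + C * (exp (1 / 8) / 2) ^ k)
      (8 ^ |β| * (1 + t) ^ β * exp t + (1 + t) ^ |β| * exp (7 * t / 8)
          + C * (1 - exp (1 / 8) / 2)⁻¹) := by
    have h7 : exp (7 * t / 8) = exp (3 * t / 8) * exp (t / 2) := by rw [← exp_add]; ring_nf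
    rw [h7]
    exact (((hasSum_pow_div_factorial t).mul_left _).add
      (((hasSum_pow_div_factorial (t / 2)).mul_left _).mul_left _)).add
      ((hasSum_geometric_of_lt_one (by positivity) hρ).mul_left C)
  have hle := one_add_natCast_rpow_mul_pow_div_factorial_le hC ht
  have hs := Summable.of_nonneg_of_le (fun k => by positivity) hle hbound.summable
  exact ⟨hs, hasSum_le hle hs.hasSum hbound⟩

theorem summable_one_add_rpow_mul_pow_div_factorial (β : ℝ) {t : ℝ} (ht : 0 ≤ t) :
    Summable fun k : ℕ => (1 + k : ℝ) ^ β * (t ^ k / k !) :=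
  have ⟨_, _, hC⟩ := one_add_rpow_le_mul_exp |β| (by norm_num : (0 : ℝ) < 1 / 8)
  (summable_and_tsum_one_add_rpow_mul_le hC ht).1

theorem isBigO_tsum_one_add_rpow_mul (β : ℝ) :
    (fun t : ℝ => ∑' k : ℕ, (1 + k : ℝ) ^ β * (t ^ k / k !)) =O[𝓟 (Ici 0)]
      fun t => (1 + t) ^ β * exp t := by
  obtain ⟨C, hC0, hC⟩ := one_add_rpow_le_mul_exp |β| (by norm_num : (0 : ℝ) < 1 / 8)
  obtain ⟨D, hD0, hD⟩ := one_add_rpow_abs_le β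
  set K := C * (1 - exp (1 / 8) / 2)⁻¹
  refine isBigO_of_le_mul (c := 8 ^ |β| + D + K * D) ?_ ?_ ?_ <;>
    filter_upwards [mem_principal_self _] with t (ht : 0 ≤ t)
  · exact tsum_nonneg fun k => by positivity
  · positivity
  obtain ⟨-, hle⟩ := summable_and_tsum_one_add_rpow_mul_le hC ht
  have hK : 0 ≤ K := mul_nonneg hC0.le (inv_nonneg.2 (by linarith [exp_one_div_eight_lt_two]))
  have hD' := hD t ht
  have h7 : (1 + t) ^ |β| * exp (7 * t / 8) ≤ D * ((1 + t) ^ β * exp t) := by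
    calc (1 + t) ^ |β| * exp (7 * t / 8)
        ≤ D * ((1 + t) ^ β * exp (1 / 8 * t)) * exp (7 * t / 8) := by gcongr
      _ = D * ((1 + t) ^ β * exp t) := by rw [mul_assoc, mul_assoc, ← exp_add]; ring_nf
  have hconst : K ≤ K * D * ((1 + t) ^ β * exp t) := by
    calc K ≤ K * (1 + t) ^ |β| :=
          le_mul_of_one_le_right hK (one_le_rpow (by linarith) (abs_nonneg β))
      _ ≤ K * (D * ((1 + t) ^ β * exp (1 / 8 * t))) := by gcongr
      _ ≤ K * D * ((1 + t) ^ β * exp t) := by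
        rw [← mul_assoc]; gcongr; linarith
  linarith

theorem exp_seven_mul_div_eight_add_two_le {t : ℝ} (ht : 24 ≤ t) :
    exp (7 * t / 8) + 2 ≤ exp t / 2 := by
  have h8 : 4 ≤ exp (t / 8) := by linarith [add_one_le_exp (t / 8)]
  have hsplit : exp t = exp (7 * t / 8) * exp (t / 8) := by rw [← exp_add]; ring_nf
  have h16 : 8 ≤ exp t := by linarith [add_one_le_exp t]
  nlinarith [exp_pos (7 * t / 8)]

theorem isBigO_one_add_rpow_mul_exp_tsum (β : ℝ) :
    (fun t : ℝ => (1 + t) ^ β * exp t) =O[𝓟 (Ici 0)]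
      fun t => ∑' k : ℕ, (1 + k : ℝ) ^ β * (t ^ k / k !) := by
  refine isBigO_of_le_mul (c := 2 * 8 ^ |β| + 25 ^ |β| * exp 24) ?_ ?_ ?_ <;>
    filter_upwards [mem_principal_self _] with t (ht : 0 ≤ t)
  · positivity
  · exact tsum_nonneg fun k => by positivity
  have hs := summable_one_add_rpow_mul_pow_div_factorial β ht
  set S := ∑' k : ℕ, (1 + k : ℝ) ^ β * (t ^ k / k !)
  have hS : 1 ≤ S := by simpa using hs.le_tsum 0 fun k _ => by positivity
  have hcompare : (1 + t) ^ β * exp t ≤ 8 ^ |β| * S + (1 + t) ^ β * (exp (7 * t / 8) + 2) := by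
    have h7 : exp (7 * t / 8) = exp (3 * t / 8) * exp (t / 2) := by rw [← exp_add]; ring_nf
    rw [h7]
    have hout := (((hasSum_pow_div_factorial (t / 2)).mul_left (exp (3 * t / 8))).add
      hasSum_geometric_two).mul_left ((1 + t) ^ β)
    refine (hasSum_le (one_add_rpow_mul_pow_div_factorial_le_window β ht)
      ((hasSum_pow_div_factorial t).mul_left _) ((hs.hasSum.mul_left _).add hout)).trans_eq ?_
    norm_num [S]
  have h8S : 0 ≤ 8 ^ |β| * S := by positivity
  have h25S : 0 ≤ 25 ^ |β| * exp 24 * S := by positivity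
  rcases le_or_gt 24 t with hlarge | hsmall
  · have := mul_le_mul_of_nonneg_left (exp_seven_mul_div_eight_add_two_le hlarge)
      (by positivity : (0 : ℝ) ≤ (1 + t) ^ β)
    linarith
  · have hw : (1 + t) ^ β ≤ (25 : ℝ) ^ |β| :=
      (rpow_le_rpow_of_exponent_le (by linarith) (le_abs_self β)).trans
        (rpow_le_rpow (by linarith) (by linarith) (abs_nonneg β))
    have := mul_le_mul hw (exp_le_exp.2 hsmall.le) (exp_pos _).le (by positivity)
    nlinarith

theorem isTheta_tsum_one_add_rpow_mul (β : ℝ) :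
    (fun t : ℝ => ∑' k : ℕ, (1 + k : ℝ) ^ β * (t ^ k / k !)) =Θ[𝓟 (Ici 0)]
      fun t => (1 + t) ^ β * exp t :=
  ⟨isBigO_tsum_one_add_rpow_mul β, isBigO_one_add_rpow_mul_exp_tsum β⟩

theorem isTheta_tsum_fockCoeff {n : ℕ} (hn : 1 ≤ n) (α : ℝ) :
    (fun t : ℝ => ∑' k, fockCoeff n α k * (t ^ k / k !)) =Θ[𝓟 (Ici 0)]
      fun t => (1 + t) ^ (α / 2) * exp t := by
  refine (isTheta_tsum_mul_of_isTheta_top (isTheta_top_fockCoeff hn α)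
    (fun k => (fockCoeff_pos hn α k).le) (fun k => by positivity) ?_ ?_).trans
    (isTheta_tsum_one_add_rpow_mul _) <;>
    filter_upwards [mem_principal_self _] with t (ht : 0 ≤ t)
  · exact fun k => by positivity
  · exact summable_one_add_rpow_mul_pow_div_factorial _ ht

theorem isTheta_one_add_sq_rpow (α : ℝ) :
    (fun r : ℝ => (1 + r ^ 2) ^ (α / 2)) =Θ[𝓟 (Ici 0)] fun r => (1 + r) ^ α := by
  have hsq : (fun r : ℝ => (1 + r ^ 2) ^ (α / 2)) =Θ[𝓟 (Ici 0)]
      fun r => ((1 + r) ^ 2) ^ (α / 2) := by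
    refine isTheta_rpow_of_le_mul (M := 2) ?_ ?_ ?_ ?_ _ <;>
      filter_upwards [mem_principal_self _] with r (hr : 0 ≤ r) <;>
      nlinarith [sq_nonneg r, sq_nonneg (1 - r)]
  refine hsq.trans_eventuallyEq ?_
  filter_upwards [mem_principal_self _] with r (hr : 0 ≤ r)
  rw [← rpow_natCast, ← rpow_mul (by positivity)]
  congr 1
  ring

theorem Kern_self_eq (n : ℕ) (α : ℝ) (z : EuclideanSpace ℂ (Fin n)) :
    Kern n α z z = ((∑' k, fockCoeff n α k * ((‖z‖ ^ 2) ^ k / k !) : ℝ) : ℂ) := by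
  rw [Kern, Complex.ofReal_tsum, inner_self_eq_norm_sq_to_K, RCLike.ofReal_eq_complex_ofReal]
  congr 1
  ext k
  simp only [fockCoeff]
  split_ifs <;> push_cast <;> ring

theorem isTheta_Kern_self {n : ℕ} (hn : 1 ≤ n) (α : ℝ) :
    (fun z : EuclideanSpace ℂ (Fin n) => Kern n α z z) =Θ[⊤]
      fun z => (1 + ‖z‖) ^ α * exp (‖z‖ ^ 2) := by
  have hnorm : Tendsto (fun z : EuclideanSpace ℂ (Fin n) => ‖z‖) ⊤ (𝓟 (Ici 0)) :=
    tendsto_principal.2 (Eventually.of_forall fun z => norm_nonneg z)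
  have hsq : Tendsto (fun z : EuclideanSpace ℂ (Fin n) => ‖z‖ ^ 2) ⊤ (𝓟 (Ici 0)) :=
    tendsto_principal.2 (Eventually.of_forall fun z => sq_nonneg ‖z‖)
  have hnorm_eq : (fun z : EuclideanSpace ℂ (Fin n) => ‖Kern n α z z‖) =ᶠ[⊤]
      fun z => ∑' k, fockCoeff n α k * ((‖z‖ ^ 2) ^ k / k !) :=
    Eventually.of_forall fun z => by
      dsimp only
      rw [Kern_self_eq, Complex.norm_real, norm_of_nonneg
        (tsum_nonneg fun k => mul_nonneg (fockCoeff_pos hn α k).le (by positivity))]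
  exact (IsTheta.of_norm_eventuallyEq hnorm_eq).trans
    ((isTheta_comp_tendsto (isTheta_tsum_fockCoeff hn α) hsq).trans
      ((isTheta_comp_tendsto (isTheta_one_add_sq_rpow α) hnorm).mul (isTheta_refl _ _)))

end WeightedFock

open WeightedFock

theorem stmt_8 (n : ℕ) (hn : 1 ≤ n) (α : ℝ) :
    ∃ c > 0, ∃ C > 0, ∀ z : EuclideanSpace ℂ (Fin n),
      c * (1 + ‖z‖) ^ α * Real.exp (‖z‖^2) ≤ ‖Kern n α z z‖ ∧
      ‖Kern n α z z‖ ≤ C * (1 + ‖z‖) ^ α * Real.exp (‖z‖^2) := by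
  obtain ⟨c, hc, C, hC, hbounds⟩ := exists_pos_bounds_of_isTheta_top (isTheta_Kern_self hn α)
  refine ⟨c, hc, C, hC, fun z => ?_⟩
  have hg : ‖(1 + ‖z‖) ^ α * Real.exp (‖z‖ ^ 2)‖ = (1 + ‖z‖) ^ α * Real.exp (‖z‖ ^ 2) :=
    norm_of_nonneg (by positivity)
  simpa only [hg, mul_assoc] using hbounds z
end

section
/- Let 0 < p ≤ 1, and let {b_j} ⊂ ℂⁿ with pairwise distances |b_i - b_j| > 2R for i ≠ j, where R > r > 0. Then Σ_{i≠j} (∫_{ℂⁿ} e^{-(1/8)|z-b_i|² - (1/8)|z-b_j|²} dν(z))^p ≤ C e^{-pR²/16} Σ_l μ(B(b_l,r))^p (Σ_j e^{-(p/64)|b_l - b_j|²})², for ν = Σ_l μ·χ_{B(b_l,r)} and any nonnegative Borel measure μ, where C depends only on p, n, r. -/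
/-!
For `i ≠ j` and `z` in the ball `B(b_l, r)`, separation gives `|z - b_i| + |z - b_j| > 2R`,
so half of the Gaussian exponent `(|z - b_i|² + |z - b_j|²) / 8` is at least `R² / 16`, while
`|z - b_i| ≥ |b_l - b_i| / 2` lets the other half dominate `(|b_l - b_i|² + |b_l - b_j|²) / 64`.
Integrating over each ball, the subadditivity `(∑ x_l)^p ≤ ∑ x_l^p` for `p ≤ 1` moves the power
inside the sum over balls, and summing over all pairs `(i, j)` produces the square of
`∑_j e^{-(p/64)|b_l - b_j|²}`; so `C = 1` works.
-/

open MeasureTheory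

noncomputable instance (n : ℕ) : MeasurableSpace (EuclideanSpace ℂ (Fin n)) := borel _
instance (n : ℕ) : BorelSpace (EuclideanSpace ℂ (Fin n)) := ⟨rfl⟩

open Metric
open scoped ENNReal

theorem ENNReal.rpow_tsum_le_tsum_rpow {ι : Type*} (f : ι → ℝ≥0∞) {p : ℝ} (hp0 : 0 < p)
    (hp1 : p ≤ 1) : (∑' i, f i) ^ p ≤ ∑' i, f i ^ p := by
  have hzero : (0 : ℝ≥0∞) ^ p = 0 := ENNReal.zero_rpow_of_pos hp0
  rw [ENNReal.tsum_eq_iSup_sum, (ENNReal.monotone_rpow_of_nonneg hp0.le).map_iSup_of_continuousAt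
    ENNReal.continuous_rpow_const.continuousAt hzero]
  exact iSup_le fun s => (Finset.le_sum_of_subadditive _ hzero.le
    (fun x y => ENNReal.rpow_add_le_add_rpow x y hp0.le hp1) s f).trans (ENNReal.sum_le_tsum s)

theorem ENNReal.ofReal_exp_rpow (x p : ℝ) :
    ENNReal.ofReal (Real.exp x) ^ p = ENNReal.ofReal (Real.exp (p * x)) := by
  rw [ENNReal.ofReal_rpow_of_pos (Real.exp_pos x), ← Real.exp_mul, mul_comm]

theorem ENNReal.tsum_prod_mul_eq_sq {ι : Type*} (f : ι → ℝ≥0∞) :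
    ∑' ij : ι × ι, f ij.1 * f ij.2 = (∑' i, f i) ^ 2 := by
  simp only [ENNReal.tsum_prod', ENNReal.tsum_mul_left, ENNReal.tsum_mul_right, sq]

theorem ENNReal.tsum_prod_tsum_mul_mul_eq_tsum_mul_sq {ι κ : Type*} (a : κ → ℝ≥0∞)
    (c : κ → ι → ℝ≥0∞) :
    ∑' ij : ι × ι, ∑' l, a l * (c l ij.1 * c l ij.2) = ∑' l, a l * (∑' j, c l j) ^ 2 := by
  simp only [ENNReal.tsum_comm (α := ι × ι), ENNReal.tsum_mul_left, ENNReal.tsum_prod_mul_eq_sq]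

theorem gaussian_exponent_le {u v a c R : ℝ} (hR : 0 ≤ R) (huv : 2 * R < u + v)
    (hu : a / 2 ≤ u) (hv : c / 2 ≤ v) (ha : 0 ≤ a) (hc : 0 ≤ c) :
    -(1/8) * u^2 - (1/8) * v^2 ≤ -R^2/16 - (1/64) * a^2 - (1/64) * c^2 := by
  nlinarith [sq_nonneg (u - v), mul_le_mul hu hu (by positivity) (by linarith),
    mul_le_mul hv hv (by positivity) (by linarith)]

section
variable {X ι : Type*} [PseudoMetricSpace X] {b : ι → X} {r R : ℝ}

theorem half_dist_le_dist_of_mem_ball (hrR : r ≤ R)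
    (hsep : ∀ i j, i ≠ j → 2 * R < dist (b i) (b j)) {l : ι} (i : ι) {z : X}
    (hz : z ∈ ball (b l) r) : dist (b l) (b i) / 2 ≤ dist z (b i) := by
  rcases eq_or_ne l i with rfl | hli
  · simp
  · have := hsep l i hli
    have := dist_triangle_left (b l) (b i) z
    rw [mem_ball] at hz
    linarith

theorem exp_pair_le_of_mem_ball (hrR : r ≤ R) (hsep : ∀ i j, i ≠ j → 2 * R < dist (b i) (b j))
    {i j : ι} (hij : i ≠ j) {l : ι} {z : X} (hz : z ∈ ball (b l) r) :
    Real.exp (-(1/8) * dist z (b i)^2 - (1/8) * dist z (b j)^2) ≤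
      Real.exp (-R^2/16 - (1/64) * dist (b l) (b i)^2 - (1/64) * dist (b l) (b j)^2) := by
  have hR : 0 ≤ R := (dist_nonneg.trans (mem_ball.1 hz).le).trans hrR
  exact Real.exp_le_exp.2 <| gaussian_exponent_le hR
    ((hsep i j hij).trans_le (dist_triangle_left _ _ z))
    (half_dist_le_dist_of_mem_ball hrR hsep i hz) (half_dist_le_dist_of_mem_ball hrR hsep j hz)
    dist_nonneg dist_nonneg

theorem lintegral_exp_pair_rpow_le [MeasurableSpace X] [OpensMeasurableSpace X]
    (μ : Measure X) {p : ℝ} (hp0 : 0 < p) (hp1 : p ≤ 1) (hrR : r ≤ R)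
    (hsep : ∀ i j, i ≠ j → 2 * R < dist (b i) (b j)) {i j : ι} (hij : i ≠ j) :
    (∫⁻ z, ENNReal.ofReal (Real.exp (-(1/8) * dist z (b i)^2 - (1/8) * dist z (b j)^2))
        ∂(Measure.sum fun l => μ.restrict (ball (b l) r))) ^ p ≤
      ENNReal.ofReal (Real.exp (-p * R^2 / 16)) * ∑' l, μ (ball (b l) r) ^ p *
        (ENNReal.ofReal (Real.exp (-(p/64) * dist (b l) (b i)^2)) *
          ENNReal.ofReal (Real.exp (-(p/64) * dist (b l) (b j)^2))) := by
  set E : ι → ℝ := fun l => -R^2/16 - (1/64) * dist (b l) (b i)^2 - (1/64) * dist (b l) (b j)^2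
  have hint : ∫⁻ z, ENNReal.ofReal (Real.exp (-(1/8) * dist z (b i)^2 - (1/8) * dist z (b j)^2))
        ∂(Measure.sum fun l => μ.restrict (ball (b l) r)) ≤
      ∑' l, ENNReal.ofReal (Real.exp (E l)) * μ (ball (b l) r) := by
    rw [lintegral_sum_measure]
    refine ENNReal.tsum_le_tsum fun l => ?_
    calc _ ≤ ∫⁻ _ in ball (b l) r, ENNReal.ofReal (Real.exp (E l)) ∂μ :=
          setLIntegral_mono' measurableSet_ball fun z hz =>
            ENNReal.ofReal_le_ofReal (exp_pair_le_of_mem_ball hrR hsep hij hz)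
      _ = _ := setLIntegral_const _ _
  calc _ ≤ (∑' l, ENNReal.ofReal (Real.exp (E l)) * μ (ball (b l) r)) ^ p :=
        ENNReal.rpow_le_rpow hint hp0.le
    _ ≤ ∑' l, (ENNReal.ofReal (Real.exp (E l)) * μ (ball (b l) r)) ^ p :=
        ENNReal.rpow_tsum_le_tsum_rpow _ hp0 hp1
    _ = _ := by
        rw [← ENNReal.tsum_mul_left]
        refine tsum_congr fun l => ?_
        have hpE : p * E l = -p * R^2 / 16 + -(p/64) * dist (b l) (b i)^2 +
            -(p/64) * dist (b l) (b j)^2 := by ring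
        rw [ENNReal.mul_rpow_of_nonneg _ _ hp0.le, ENNReal.ofReal_exp_rpow, hpE, Real.exp_add,
          Real.exp_add, ENNReal.ofReal_mul (by positivity), ENNReal.ofReal_mul (by positivity)]
        ring

end

theorem stmt_19_general (n : ℕ) (p r : ℝ) (hp0 : 0 < p) (hp1 : p ≤ 1) :
    ∃ C > 0, ∀ R : ℝ, r < R →
      ∀ b : ℕ → EuclideanSpace ℂ (Fin n),
        (∀ i j, i ≠ j → 2 * R < ‖b i - b j‖) →
        ∀ μ : Measure (EuclideanSpace ℂ (Fin n)),
          (∑' ij : ℕ × ℕ,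
              if ij.1 ≠ ij.2 then
                (∫⁻ z, ENNReal.ofReal
                    (Real.exp (-(1/8) * ‖z - b ij.1‖^2 - (1/8) * ‖z - b ij.2‖^2))
                  ∂(Measure.sum fun l : ℕ => μ.restrict (Metric.ball (b l) r))) ^ p
              else 0) ≤
            ENNReal.ofReal (C * Real.exp (-p * R^2 / 16)) *
              ∑' l : ℕ, μ (Metric.ball (b l) r) ^ p *
                (∑' j : ℕ, ENNReal.ofReal (Real.exp (-(p/64) * ‖b l - b j‖^2))) ^ 2 := by
  refine ⟨1, one_pos, fun R hR b hsep μ => ?_⟩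
  simp only [← dist_eq_norm, one_mul] at hsep ⊢
  calc _ ≤ ∑' ij : ℕ × ℕ, ENNReal.ofReal (Real.exp (-p * R^2 / 16)) *
          ∑' l, μ (ball (b l) r) ^ p *
            (ENNReal.ofReal (Real.exp (-(p/64) * dist (b l) (b ij.1)^2)) *
              ENNReal.ofReal (Real.exp (-(p/64) * dist (b l) (b ij.2)^2))) := by
        refine ENNReal.tsum_le_tsum fun ij => ?_
        split_ifs with hij
        · exact lintegral_exp_pair_rpow_le μ hp0 hp1 hR.le hsep hij
        · exact zero_le
    _ = _ := by
        rw [ENNReal.tsum_mul_left, ENNReal.tsum_prod_tsum_mul_mul_eq_tsum_mul_sq _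
          fun l j => ENNReal.ofReal (Real.exp (-(p/64) * dist (b l) (b j)^2))]

theorem stmt_19 (n : ℕ) (p r : ℝ) (hp0 : 0 < p) (hp1 : p ≤ 1) (hr : 0 < r) :
    ∃ C > 0, ∀ R : ℝ, r < R →
      ∀ b : ℕ → EuclideanSpace ℂ (Fin n),
        (∀ i j, i ≠ j → 2 * R < ‖b i - b j‖) →
        ∀ μ : Measure (EuclideanSpace ℂ (Fin n)),
          (∑' ij : ℕ × ℕ,
              if ij.1 ≠ ij.2 then
                (∫⁻ z, ENNReal.ofReal
                    (Real.exp (-(1/8) * ‖z - b ij.1‖^2 - (1/8) * ‖z - b ij.2‖^2))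
                  ∂(Measure.sum fun l : ℕ => μ.restrict (Metric.ball (b l) r))) ^ p
              else 0) ≤
            ENNReal.ofReal (C * Real.exp (-p * R^2 / 16)) *
              ∑' l : ℕ, μ (Metric.ball (b l) r) ^ p *
                (∑' j : ℕ, ENNReal.ofReal (Real.exp (-(p/64) * ‖b l - b j‖^2))) ^ 2 :=
  stmt_19_general n p r hp0 hp1
end
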